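/- arXiv:1904.07322 — 3 statements merged into one kernel-verified Lean document; each statement's English description precedes it below -/
import Mathlib

section
/- Let (C, D) be a complete cotorsion pair in an abelian category A. The assignments A ↦ cA and A ↦ dA (from the approximation sequence 0 → dA → cA → A → 0) define functors from A to the additive quotient categories C/(C ∩ D) and D/(C ∩ D), respectively. -/
open CategoryTheory Category Limits

attribute [local instance] CategoryTheory.Abelian.hasFiniteBiproducts
attribute [local instance] CategoryTheory.Limits.HasFiniteBiproducts.of_hasFiniteProducts

universe w v u

namespace Paper

variable {A : Type u} [Category.{v} A] [Abelian A]

/-- `IsSes i p` expresses that `0 ⟶ X ⟶ Y ⟶ Z ⟶ 0` is a short exact sequence. -/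
def IsSes {X Y Z : A} (i : X ⟶ Y) (p : Y ⟶ Z) : Prop :=
  ∃ w : i ≫ p = 0, (ShortComplex.mk i p w).ShortExact

/-- `Ext¹(X, Y) = 0`, phrased as: every extension of `X` by `Y` splits. -/
def Ext1Zero (X Y : A) : Prop :=
  ∀ ⦃E : A⦄ (i : Y ⟶ E) (p : E ⟶ X), IsSes i p → ∃ s : X ⟶ E, s ≫ p = 𝟙 X

/-- A torsion pair `(T, F)` of (strictly full) subcategories of an abelian category. -/
structure IsTorsionPair (T F : Set A) : Prop where
  isoClosed_torsion : ∀ {X Y : A}, (X ≅ Y) → X ∈ T → Y ∈ T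
  isoClosed_torsionFree : ∀ {X Y : A}, (X ≅ Y) → X ∈ F → Y ∈ F
  hom_zero : ∀ {X Y : A}, X ∈ T → Y ∈ F → ∀ f : X ⟶ Y, f = 0
  seq : ∀ X : A, ∃ (tX fX : A) (i : tX ⟶ X) (p : X ⟶ fX), tX ∈ T ∧ fX ∈ F ∧ IsSes i p

/-- A (complete) cotorsion pair `(C, D)` in an abelian category. -/
structure IsCotorsionPair (C D : Set A) : Prop where
  left_eq : C = {X : A | ∀ Y ∈ D, Ext1Zero X Y}
  right_eq : D = {Y : A | ∀ X ∈ C, Ext1Zero X Y}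
  seq₁ : ∀ X : A, ∃ (dX cX : A) (i : dX ⟶ cX) (p : cX ⟶ X), dX ∈ D ∧ cX ∈ C ∧ IsSes i p
  seq₂ : ∀ X : A, ∃ (dX cX : A) (i : X ⟶ dX) (p : dX ⟶ cX), dX ∈ D ∧ cX ∈ C ∧ IsSes i p

/-- `f` factors through some object belonging to the class `P`. -/
def FactorsThroughClass (P : Set A) {X Y : A} (f : X ⟶ Y) : Prop :=
  ∃ (Z : A) (_ : Z ∈ P) (a : X ⟶ Z) (b : Z ⟶ Y), a ≫ b = f

/-- The hom-relation on the full subcategory on `S` identifying two morphisms whose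
difference factors through an object of `P`. -/
def quotRel (S P : Set A) : HomRel (ObjectProperty.FullSubcategory (· ∈ S)) :=
  fun {X Y} f g =>
    FactorsThroughClass P ((show X.obj ⟶ Y.obj from f.hom) - (show X.obj ⟶ Y.obj from g.hom))

/-- The additive quotient of the full subcategory on `S` by the morphisms factoring
through objects of `P`. -/
abbrev AddQuot (S P : Set A) := CategoryTheory.Quotient (quotRel S P)

/-- The subcategory of quotients of (finite direct sums of) objects of `T`. -/
def Fac (T : Set A) : Set A := {X : A | ∃ Y ∈ T, ∃ p : Y ⟶ X, Epi p}

/-- The right `Hom`-orthogonal `T^⊥`. -/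
def rightHomPerp (T : Set A) : Set A := {X : A | ∀ Y ∈ T, ∀ f : Y ⟶ X, f = 0}

/-- The left `Hom`-orthogonal `^⊥F`. -/
def leftHomPerp (F : Set A) : Set A := {X : A | ∀ Y ∈ F, ∀ f : X ⟶ Y, f = 0}

/-- The right `Ext¹`-orthogonal `T^{⊥₁}`. -/
def rightExt1Perp (T : Set A) : Set A := {X : A | ∀ Y ∈ T, Ext1Zero Y X}

/-- The left `Ext¹`-orthogonal `^{⊥₁}D`. -/
def leftExt1Perp (D : Set A) : Set A := {X : A | ∀ Y ∈ D, Ext1Zero X Y}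

/-- `X` has projective dimension at most one: it has a length-one projective resolution. -/
def PdLeOne (X : A) : Prop :=
  ∃ (P₁ P₀ : A) (i : P₁ ⟶ P₀) (p : P₀ ⟶ X), Projective P₁ ∧ Projective P₀ ∧ IsSes i p

/-- A weak tilting subcategory of an abelian category with enough projectives. -/
structure IsWeakTilting (T : Set A) : Prop where
  sum_mem : ∀ {X Y : A}, X ∈ T → Y ∈ T → (X ⊞ Y) ∈ T
  summand_mem : ∀ {X Y : A}, X ∈ T → (∃ (s : Y ⟶ X) (r : X ⟶ Y), s ≫ r = 𝟙 Y) → Y ∈ T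
  ext1_zero : ∀ {X Y : A}, X ∈ T → Y ∈ T → Ext1Zero X Y
  pd_le_one : ∀ X ∈ T, PdLeOne X
  coresolution : ∀ P : A, Projective P → ∃ (T₀ T₁ : A) (i : P ⟶ T₀) (p : T₀ ⟶ T₁),
    T₀ ∈ T ∧ T₁ ∈ T ∧ IsSes i p

/-- `φ : X ⟶ E` is a right `T`-approximation of `E`. -/
def IsRightApprox (T : Set A) {X E : A} (φ : X ⟶ E) : Prop :=
  X ∈ T ∧ ∀ X' ∈ T, ∀ f : X' ⟶ E, ∃ g : X' ⟶ X, g ≫ φ = f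

/-- A tilting subcategory: a weak tilting subcategory that is contravariantly finite. -/
structure IsTilting (T : Set A) extends IsWeakTilting T : Prop where
  contravariantly_finite : ∀ E : A, ∃ (X : A) (φ : X ⟶ E), IsRightApprox T φ


/-!
Lifting `cX ⟶ X ⟶ Y` along `cY ⟶ Y` (possible since `Ext¹(cX, dY) = 0`) and restricting to
kernels turns every `f : X ⟶ Y` into a morphism of approximation sequences. Two such morphisms
over the same `f` differ by a morphism over `0`, whose components factor through a map
`cX ⟶ dY`. Every map from an object of `C` to an object `W ∈ D` factors through `C ∩ D`: it lifts
along `cW ⟶ W`, and `cW ∈ D` because `D` is closed under extensions. So both assignments are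
functorial in the quotients by `C ∩ D`.
-/

lemma isSes_of_lift {K E M : A} {i : K ⟶ E} {p : E ⟶ M} [Mono i] [Epi p] (w : i ≫ p = 0)
    (lift : ∀ {T : A} (t : T ⟶ E), t ≫ p = 0 → ∃ t' : T ⟶ K, t' ≫ i = t) : IsSes i p :=
  ⟨w, ⟨(ShortComplex.mk i p w).exact_of_f_is_kernel
    (KernelFork.IsLimit.ofι' i w fun t ht => ⟨(lift t ht).choose, (lift t ht).choose_spec⟩)⟩⟩

lemma IsSes.pullback {K E M W : A} {i : K ⟶ E} {p : E ⟶ M} (hip : IsSes i p) (u : W ⟶ M) :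
    ∃ l : K ⟶ pullback p u, IsSes l (pullback.snd p u) := by
  obtain ⟨w, hS⟩ := hip
  have : Mono i := hS.mono_f
  have : Epi p := hS.epi_g
  have hw : i ≫ p = (0 : K ⟶ W) ≫ u := by rw [w, zero_comp]
  have : Mono (pullback.lift i 0 hw) := mono_of_mono_fac (pullback.lift_fst _ _ _)
  refine ⟨pullback.lift i 0 hw, isSes_of_lift (pullback.lift_snd _ _ _) fun t ht => ?_⟩
  have htp : (t ≫ pullback.fst p u) ≫ p = 0 := by
    rw [assoc, pullback.condition, reassoc_of% ht, zero_comp]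
  refine ⟨hS.exact.lift _ htp, pullback.hom_ext ?_ ?_⟩
  · rw [assoc, pullback.lift_fst]
    exact hS.exact.lift_f _ htp
  · rw [assoc, pullback.lift_snd, comp_zero, ht]

lemma IsSes.pushout {K E M W : A} {i : K ⟶ E} {p : E ⟶ M} (hip : IsSes i p) (u : K ⟶ W) :
    ∃ q : pushout i u ⟶ M, pushout.inl i u ≫ q = p ∧ IsSes (pushout.inr i u) q := by
  obtain ⟨w, hS⟩ := hip
  have : Mono i := hS.mono_f
  have : Epi p := hS.epi_g
  have hw : i ≫ p = u ≫ (0 : W ⟶ M) := by rw [w, comp_zero]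
  have hq := pushout.inl_desc p 0 hw
  have : Epi (pushout.desc p 0 hw) := epi_of_epi_fac hq
  refine ⟨pushout.desc p 0 hw, hq, pushout.inr_desc _ _ _,
    ⟨ShortComplex.exact_of_g_is_cokernel _ (CokernelCofork.IsColimit.ofπ' _ _ fun t ht => ?_)⟩⟩
  have hit : i ≫ pushout.inl i u ≫ t = 0 := by
    rw [pushout.condition_assoc]
    exact (u ≫= ht).trans comp_zero
  refine ⟨hS.exact.desc _ hit, pushout.hom_ext ?_ ?_⟩
  · rw [reassoc_of% hq]
    exact hS.exact.g_desc _ hit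
  · rw [pushout.inr_desc_assoc, zero_comp]
    exact ht.symm

lemma exists_lift_of_ext1Zero {K E M W : A} {i : K ⟶ E} {p : E ⟶ M} (hip : IsSes i p)
    (hW : Ext1Zero W K) (u : W ⟶ M) : ∃ v : W ⟶ E, v ≫ p = u := by
  obtain ⟨l, hl⟩ := hip.pullback u
  obtain ⟨s, hs⟩ := hW l _ hl
  exact ⟨s ≫ pullback.fst p u, by rw [assoc, pullback.condition, reassoc_of% hs]⟩

/-- Push the extension forward along `r`, split it there, and lift the splitting back
along `E ⟶ pushout`, whose kernel is `Y₁`. -/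
lemma ext1Zero_of_isSes {X Y₁ Y Y₂ : A} {k : Y₁ ⟶ Y} {r : Y ⟶ Y₂} (hkr : IsSes k r)
    (h₁ : Ext1Zero X Y₁) (h₂ : Ext1Zero X Y₂) : Ext1Zero X Y := by
  intro E j p hjp
  obtain ⟨q, hq, hinr⟩ := hjp.pushout r
  obtain ⟨σ, hσ⟩ := h₂ _ q hinr
  obtain ⟨wkr, hkr⟩ := hkr
  obtain ⟨wjp, hjp⟩ := hjp
  have : Mono k := hkr.mono_f
  have : Epi r := hkr.epi_g
  have : Mono j := hjp.mono_f
  have hker : IsSes (k ≫ j) (pushout.inl j r) := by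
    refine isSes_of_lift (by rw [assoc, pushout.condition, reassoc_of% wkr, zero_comp])
      fun t ht => ?_
    have htp : t ≫ p = 0 := by rw [← hq, reassoc_of% ht, zero_comp]
    obtain ⟨t₁, ht₁⟩ := hjp.exact.lift' t htp
    have ht₁r : t₁ ≫ r = 0 := by
      rw [← cancel_mono (pushout.inr j r), assoc, ← pushout.condition, reassoc_of% ht₁, ht,
        zero_comp]
    obtain ⟨t₂, ht₂⟩ := hkr.exact.lift' t₁ ht₁r
    exact ⟨t₂, by rw [← assoc, ht₂, ht₁]⟩
  obtain ⟨s, hs⟩ := exists_lift_of_ext1Zero hker h₁ σ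
  exact ⟨s, by rw [← hq, reassoc_of% hs, hσ]⟩

def AddQuot.functorMk {B : Type*} [Category B] {S P : Set A} (obj : B → A)
    (obj_mem : ∀ X, obj X ∈ S) (map : ∀ {X Y : B}, (X ⟶ Y) → (obj X ⟶ obj Y))
    (map_id : ∀ X, FactorsThroughClass P (map (𝟙 X) - 𝟙 (obj X)))
    (map_comp : ∀ {X Y Z : B} (f : X ⟶ Y) (g : Y ⟶ Z),
      FactorsThroughClass P (map (f ≫ g) - map f ≫ map g)) :
    B ⥤ AddQuot S P where
  obj X := ⟨⟨obj X, obj_mem X⟩⟩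
  map f := (Quotient.functor _).map (ObjectProperty.homMk (map f))
  map_id X := (CategoryTheory.Quotient.sound _ (map_id X)).trans ((Quotient.functor _).map_id _)
  map_comp f g :=
    (CategoryTheory.Quotient.sound _ (map_comp f g)).trans ((Quotient.functor _).map_comp _ _)

/-- The approximation sequence `0 ⟶ dX ⟶ cX ⟶ X ⟶ 0` (a special `C`-precover of `X`), with
`ker = dX` and `obj = cX`. -/
structure SpecialPrecover (C D : Set A) (X : A) where
  ker : A
  obj : A
  ι : ker ⟶ obj
  π : obj ⟶ X
  zero : ι ≫ π = 0
  shortExact : (ShortComplex.mk ι π zero).ShortExact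
  ker_mem : ker ∈ D
  obj_mem : obj ∈ C

namespace SpecialPrecover

variable {C D : Set A} {X : A} (P : SpecialPrecover C D X)

abbrev sc : ShortComplex A := ShortComplex.mk P.ι P.π P.zero

lemma isSes : IsSes P.ι P.π := ⟨P.zero, P.shortExact⟩

end SpecialPrecover

namespace IsCotorsionPair

variable {C D : Set A}

lemma ext1Zero (h : IsCotorsionPair C D) {X Y : A} (hX : X ∈ C) (hY : Y ∈ D) :
    Ext1Zero X Y := by
  rw [h.left_eq] at hX
  exact hX Y hY

lemma mem_right_of_isSes (h : IsCotorsionPair C D) {Y₁ Y Y₂ : A} {k : Y₁ ⟶ Y} {r : Y ⟶ Y₂}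
    (hkr : IsSes k r) (h₁ : Y₁ ∈ D) (h₂ : Y₂ ∈ D) : Y ∈ D := by
  rw [h.right_eq] at h₁ h₂ ⊢
  exact fun X hX => ext1Zero_of_isSes hkr (h₁ X hX) (h₂ X hX)

lemma nonempty_specialPrecover (h : IsCotorsionPair C D) (X : A) :
    Nonempty (SpecialPrecover C D X) := by
  obtain ⟨dX, cX, i, p, hd, hc, w, hS⟩ := h.seq₁ X
  exact ⟨⟨dX, cX, i, p, w, hS, hd, hc⟩⟩

noncomputable def specialPrecover (h : IsCotorsionPair C D) (X : A) : SpecialPrecover C D X :=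
  (h.nonempty_specialPrecover X).some

lemma exists_lift (h : IsCotorsionPair C D) {X W : A} (P : SpecialPrecover C D X) (hW : W ∈ C)
    (u : W ⟶ X) : ∃ v : W ⟶ P.obj, v ≫ P.π = u :=
  exists_lift_of_ext1Zero P.isSes (h.ext1Zero hW P.ker_mem) u

lemma factorsThroughClass_inter (h : IsCotorsionPair C D) {V W : A} (hV : V ∈ C) (hW : W ∈ D)
    (g : V ⟶ W) : FactorsThroughClass (C ∩ D) g := by
  let P := h.specialPrecover W
  obtain ⟨v, hv⟩ := h.exists_lift P hV g
  exact ⟨P.obj, ⟨P.obj_mem, h.mem_right_of_isSes P.isSes P.ker_mem hW⟩, v, P.π, hv⟩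

lemma exists_sc_hom (h : IsCotorsionPair C D) {X Y : A} (P : SpecialPrecover C D X)
    (Q : SpecialPrecover C D Y) (f : X ⟶ Y) : ∃ φ : P.sc ⟶ Q.sc, φ.τ₃ = f := by
  have : Mono Q.ι := Q.shortExact.mono_f
  obtain ⟨g, hg⟩ := h.exists_lift Q P.obj_mem (P.π ≫ f)
  have hgπ : (P.ι ≫ g) ≫ Q.π = 0 := by rw [assoc, hg, reassoc_of% P.zero, zero_comp]
  exact ⟨⟨Q.shortExact.exact.lift _ hgπ, g, f, Q.shortExact.exact.lift_f _ hgπ, hg⟩, rfl⟩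

lemma factorsThroughClass_sub_τ_of_τ₃_eq (h : IsCotorsionPair C D) {X Y : A}
    {P : SpecialPrecover C D X} {Q : SpecialPrecover C D Y} (φ ψ : P.sc ⟶ Q.sc)
    (hφψ : φ.τ₃ = ψ.τ₃) :
    FactorsThroughClass (C ∩ D) (φ.τ₁ - ψ.τ₁) ∧ FactorsThroughClass (C ∩ D) (φ.τ₂ - ψ.τ₂) := by
  have : Mono Q.ι := Q.shortExact.mono_f
  have hπ : (φ - ψ).τ₂ ≫ Q.π = 0 := by
    rw [(φ - ψ).comm₂₃]
    simp [hφψ]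
  obtain ⟨γ, hγ⟩ := Q.shortExact.exact.lift' _ hπ
  have hι : (φ - ψ).τ₁ = P.ι ≫ γ := by
    rw [← cancel_mono Q.ι, (φ - ψ).comm₁₂]
    exact (P.ι ≫= hγ).symm.trans (assoc _ _ _).symm
  obtain ⟨Z, hZ, a, b, hab⟩ := h.factorsThroughClass_inter P.obj_mem Q.ker_mem γ
  exact ⟨⟨Z, hZ, P.ι ≫ a, b, by rw [assoc, hab, ← hι]; rfl⟩,
    ⟨Z, hZ, a, b ≫ Q.ι, by rw [← assoc, hab, hγ]; rfl⟩⟩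

noncomputable def scHom (h : IsCotorsionPair C D) {X Y : A} (f : X ⟶ Y) :
    (h.specialPrecover X).sc ⟶ (h.specialPrecover Y).sc :=
  (h.exists_sc_hom _ _ f).choose

lemma scHom_τ₃ (h : IsCotorsionPair C D) {X Y : A} (f : X ⟶ Y) : (h.scHom f).τ₃ = f :=
  (h.exists_sc_hom _ _ f).choose_spec

lemma scHom_comp_τ₃ (h : IsCotorsionPair C D) {X Y Z : A} (f : X ⟶ Y) (g : Y ⟶ Z) :
    (h.scHom (f ≫ g)).τ₃ = (h.scHom f ≫ h.scHom g).τ₃ := by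
  simp [scHom_τ₃]

noncomputable def precoverFunctor (h : IsCotorsionPair C D) : A ⥤ AddQuot C (C ∩ D) :=
  AddQuot.functorMk (fun X => (h.specialPrecover X).obj) (fun X => (h.specialPrecover X).obj_mem)
    (fun f => (h.scHom f).τ₂)
    (fun X => (h.factorsThroughClass_sub_τ_of_τ₃_eq _ (𝟙 _) (h.scHom_τ₃ (𝟙 X))).2)
    (fun f g => (h.factorsThroughClass_sub_τ_of_τ₃_eq _ _ (h.scHom_comp_τ₃ f g)).2)

noncomputable def precoverKerFunctor (h : IsCotorsionPair C D) : A ⥤ AddQuot D (C ∩ D) :=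
  AddQuot.functorMk (fun X => (h.specialPrecover X).ker) (fun X => (h.specialPrecover X).ker_mem)
    (fun f => (h.scHom f).τ₁)
    (fun X => (h.factorsThroughClass_sub_τ_of_τ₃_eq _ (𝟙 _) (h.scHom_τ₃ (𝟙 X))).1)
    (fun f g => (h.factorsThroughClass_sub_τ_of_τ₃_eq _ _ (h.scHom_comp_τ₃ f g)).1)

end IsCotorsionPair

/-- For a complete cotorsion pair `(C, D)`, the assignments `A ↦ cA`
and `A ↦ dA` coming from the approximation sequences `0 → dA → cA → A → 0` define
functors to the additive quotients `C/(C ∩ D)` and `D/(C ∩ D)` respectively. -/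
theorem statement4 {C D : Set A} (h : IsCotorsionPair C D) :
    ∃ (c : A ⥤ AddQuot C (C ∩ D)) (d : A ⥤ AddQuot D (C ∩ D)),
      ∀ X : A, ∃ (i : ((d.obj X).as).obj ⟶ ((c.obj X).as).obj)
        (p : ((c.obj X).as).obj ⟶ X), IsSes i p :=
  ⟨h.precoverFunctor, h.precoverKerFunctor, fun X => ⟨_, _, (h.specialPrecover X).isSes⟩⟩

end Paper
end

section
/- Let (C, D) be a complete cotorsion pair in an abelian category A. Then D is closed under quotient objects if and only if every object of C has projective dimension at most one. -/
open CategoryTheory Category Limits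

attribute [local instance] CategoryTheory.Abelian.hasFiniteBiproducts
attribute [local instance] CategoryTheory.Limits.HasFiniteBiproducts.of_hasFiniteProducts

universe w v u

namespace Paper

variable {A : Type u} [Category.{v} A] [Abelian A]

/-- `Ext²(X, −) = 0`, i.e. `X` has projective dimension at most one.  This is phrased
via the long exact sequence: for every epimorphism `q : B ↠ C`, the induced map
`Ext¹(X, B) → Ext¹(X, C)` is surjective, i.e. every extension of `X` by `C` is the
pushout along `q` of an extension of `X` by `B`. -/
def Ext2Zero (X : A) : Prop :=
  ∀ ⦃B C : A⦄ (q : B ⟶ C), Epi q →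
    ∀ ⦃E : A⦄ (i : C ⟶ E) (p : E ⟶ X), IsSes i p →
      ∃ (E' : A) (i' : B ⟶ E') (p' : E' ⟶ X) (e : E' ⟶ E),
        IsSes i' p' ∧ i' ≫ e = q ≫ i ∧ p' = e ≫ p

/-! Given an epimorphism `q : B ⟶ K` and `X ∈ C`, embed `B` into some `d ∈ D` with cokernel `c`.
Pushing out along `q` gives `0 ⟶ K ⟶ M ⟶ c ⟶ 0` where `M`, a quotient of `d`, lies in `D`.
As `Ext¹(X, M) = 0`, every extension of `X` by `K` is the pullback along some `f : X ⟶ c` of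
`M ⟶ c`, and therefore the pushout along `q` of the pullback of `d ⟶ c` along `f`.
Conversely, if `Ext²(Z, -) = 0` then `Ext¹(Z, -)` is right exact, so `Ext¹(Z, X) = 0` passes to
quotients of `X`. -/

lemma isSes_pushout {Y U V Z W : A} {a : Y ⟶ U} {b : U ⟶ V} (hab : IsSes a b)
    {g : Y ⟶ Z} {k : U ⟶ W} {l : Z ⟶ W} (sq : IsPushout a g k l) :
    ∃ b' : W ⟶ V, k ≫ b' = b ∧ l ≫ b' = 0 ∧ IsSes l b' := by
  obtain ⟨w, hse⟩ := hab
  have : Mono l := (MorphismProperty.monomorphisms A).of_isPushout sq.flip hse.mono_f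
  have hw : a ≫ b = g ≫ (0 : Z ⟶ V) := by rw [w, comp_zero]
  set b' := sq.desc b 0 hw
  have hk : k ≫ b' = b := sq.inl_desc b 0 hw
  have hl : l ≫ b' = 0 := sq.inr_desc b 0 hw
  have : Epi b := hse.epi_g
  have : Epi b' := epi_of_epi_fac hk
  refine ⟨b', hk, hl, hl, ⟨(ShortComplex.mk l b' hl).exact_of_g_is_cokernel
    (CokernelCofork.IsColimit.ofπ' b' hl fun φ hφ => ?_)⟩⟩
  obtain ⟨ψ, hψ⟩ := CokernelCofork.IsColimit.desc' hse.gIsCokernel (k ≫ φ)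
    (by rw [← assoc, sq.w, assoc, hφ, comp_zero])
  exact ⟨ψ, sq.hom_ext (by rw [← assoc, hk]; exact hψ) (by rw [← assoc, hl, zero_comp, hφ])⟩

lemma isSes_pullback {Y U V Z P : A} {a : Y ⟶ U} {b : U ⟶ V} (hab : IsSes a b)
    {g : Z ⟶ V} {fst : P ⟶ U} {snd : P ⟶ Z} (sq : IsPullback fst snd b g) :
    ∃ a' : Y ⟶ P, a' ≫ fst = a ∧ a' ≫ snd = 0 ∧ IsSes a' snd := by
  obtain ⟨w, hse⟩ := hab
  have : Epi snd := (MorphismProperty.epimorphisms A).of_isPullback sq hse.epi_g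
  have hw : a ≫ b = (0 : Y ⟶ Z) ≫ g := by rw [w, zero_comp]
  set a' := sq.lift a 0 hw
  have hf : a' ≫ fst = a := sq.lift_fst a 0 hw
  have hs : a' ≫ snd = 0 := sq.lift_snd a 0 hw
  have : Mono a := hse.mono_f
  have : Mono a' := mono_of_mono_fac hf
  refine ⟨a', hf, hs, hs, ⟨(ShortComplex.mk a' snd hs).exact_of_f_is_kernel
    (KernelFork.IsLimit.ofι' a' hs fun φ hφ => ?_)⟩⟩
  obtain ⟨ψ, hψ⟩ := KernelFork.IsLimit.lift' hse.fIsKernel (φ ≫ fst)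
    (by rw [assoc, sq.w, ← assoc, hφ, zero_comp])
  exact ⟨ψ, sq.hom_ext (by rw [assoc, hf]; exact hψ) (by rw [assoc, hs, comp_zero, hφ])⟩

lemma isPullback_of_isSes {K E X M c : A} {i : K ⟶ E} {p : E ⟶ X} {m : K ⟶ M} {r : M ⟶ c}
    (hE : IsSes i p) (hM : IsSes m r) {g : E ⟶ M} {f : X ⟶ c} (hg : i ≫ g = m)
    (hf : g ≫ r = p ≫ f) : IsPullback g p r f := by
  obtain ⟨m', hm'fst, hm'snd, hP⟩ := isSes_pullback hM (IsPullback.of_hasPullback r f)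
  let φ : ShortComplex.mk i p hE.1 ⟶ ShortComplex.mk m' (pullback.snd r f) hP.1 :=
    { τ₁ := 𝟙 K
      τ₂ := pullback.lift g p hf
      τ₃ := 𝟙 X
      comm₁₂ := by
        change 𝟙 K ≫ m' = i ≫ pullback.lift g p hf
        apply pullback.hom_ext
        · rw [id_comp, hm'fst, assoc, pullback.lift_fst, hg]
        · rw [id_comp, hm'snd, assoc, pullback.lift_snd, hE.1]
      comm₂₃ := (pullback.lift_snd g p hf).trans (comp_id p).symm }
  have : IsIso φ.τ₂ := ShortComplex.isIso₂_of_shortExact_of_isIso₁₃ φ hE.2 hP.2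
  exact IsPullback.of_iso_pullback ⟨hf⟩ (asIso φ.τ₂) (pullback.lift_fst g p hf)
    (pullback.lift_snd g p hf)

lemma Ext1Zero.exists_retraction {X M E : A} (hX : Ext1Zero X M) {n : M ⟶ E} {p : E ⟶ X}
    (hE : IsSes n p) : ∃ ρ : E ⟶ M, n ≫ ρ = 𝟙 M := by
  obtain ⟨s, hs⟩ := hX n p hE
  exact ⟨_, (ShortComplex.Splitting.ofExactOfSection _ hE.2.exact s hs hE.2.mono_f).f_r⟩

/-- Exactness of `Hom(E, M) ⟶ Hom(K, M) ⟶ Ext¹(X, M)`. -/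
lemma Ext1Zero.exists_comp_eq {K E X M : A} (hX : Ext1Zero X M) {i : K ⟶ E} {p : E ⟶ X}
    (hE : IsSes i p) (m : K ⟶ M) : ∃ g : E ⟶ M, i ≫ g = m := by
  have sq := IsPushout.of_hasPushout i m
  obtain ⟨p₁, -, -, hp₁⟩ := isSes_pushout hE sq
  obtain ⟨ρ, hρ⟩ := hX.exists_retraction hp₁
  exact ⟨pushout.inl i m ≫ ρ, by rw [← assoc, sq.w, assoc, hρ, comp_id]⟩

lemma exists_isSes_pushforward_of_ext1Zero {B d c K M X E : A} {j : B ⟶ d} {r : d ⟶ c}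
    (hjr : IsSes j r) {q : B ⟶ K} {u : d ⟶ M} {m : K ⟶ M} (sq : IsPushout j q u m)
    (hX : Ext1Zero X M) {i : K ⟶ E} {p : E ⟶ X} (hE : IsSes i p) :
    ∃ (E' : A) (i' : B ⟶ E') (p' : E' ⟶ X) (e : E' ⟶ E),
      IsSes i' p' ∧ i' ≫ e = q ≫ i ∧ p' = e ≫ p := by
  obtain ⟨r', hur', hmr', hM⟩ := isSes_pushout hjr sq
  obtain ⟨g, hg⟩ := hX.exists_comp_eq hE m
  obtain ⟨f, hf⟩ := CokernelCofork.IsColimit.desc' hE.2.gIsCokernel (g ≫ r')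
    (by rw [reassoc_of% hg, hmr'])
  have hEpb : IsPullback g p r' f := isPullback_of_isSes hE hM hg hf.symm
  obtain ⟨i', hi'fst, hi'snd, hE'⟩ := isSes_pullback hjr (IsPullback.of_hasPullback r f)
  have hw : (pullback.fst r f ≫ u) ≫ r' = pullback.snd r f ≫ f := by
    rw [assoc, hur', pullback.condition]
  refine ⟨_, i', _, hEpb.lift _ _ hw, hE', hEpb.hom_ext ?_ ?_, (hEpb.lift_snd _ _ hw).symm⟩
  · rw [assoc, hEpb.lift_fst, reassoc_of% hi'fst, sq.w, assoc, hg]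
  · rw [assoc, hEpb.lift_snd, hi'snd, assoc, hE.1, comp_zero]

lemma Ext2Zero.ext1Zero_of_epi {Z X Y : A} (hZ : Ext2Zero Z) (hX : Ext1Zero Z X) (π : X ⟶ Y)
    [Epi π] : Ext1Zero Z Y := by
  intro E i p hE
  obtain ⟨E', i', p', e, hE', -, rfl⟩ := hZ π inferInstance i p hE
  obtain ⟨s, hs⟩ := hX i' _ hE'
  exact ⟨s ≫ e, by rw [assoc, hs]⟩

lemma IsCotorsionPair.mem_right_iff {C D : Set A} (h : IsCotorsionPair C D) {Y : A} :
    Y ∈ D ↔ ∀ X ∈ C, Ext1Zero X Y :=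
  Set.ext_iff.mp h.right_eq Y

lemma IsCotorsionPair.ext1Zero_s5 {C D : Set A} (h : IsCotorsionPair C D) {X Y : A} (hX : X ∈ C)
    (hY : Y ∈ D) : Ext1Zero X Y :=
  h.mem_right_iff.mp hY X hX

/-- For a complete cotorsion pair `(C, D)`, the class `D` is closed
under quotient objects if and only if every object of `C` has projective dimension at
most one. -/
theorem statement5 {C D : Set A} (h : IsCotorsionPair C D) :
    (∀ {X Y : A} (p : X ⟶ Y), Epi p → X ∈ D → Y ∈ D) ↔ (∀ X ∈ C, Ext2Zero X) := by
  constructor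
  · intro hD X hX B K q hq E i p hE
    obtain ⟨d, c, j, r, hd, -, hjr⟩ := h.seq₂ B
    have hM : pushout j q ∈ D := hD (pushout.inl j q) inferInstance hd
    exact exists_isSes_pushforward_of_ext1Zero hjr (IsPushout.of_hasPushout j q)
      (h.ext1Zero_s5 hX hM) hE
  · intro hC X Y π hπ hX
    exact h.mem_right_iff.mpr fun Z hZ => (hC Z hZ).ext1Zero_of_epi (h.ext1Zero_s5 hZ hX) π

end Paper
end

section
/- Let A be a noetherian abelian category with enough projectives and T a weak tilting subcategory of A. Then T is contravariantly finite in A, i.e., every object of A admits a right T-approximation. -/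
open CategoryTheory Category Limits

attribute [local instance] CategoryTheory.Abelian.hasFiniteBiproducts
attribute [local instance] CategoryTheory.Limits.HasFiniteBiproducts.of_hasFiniteProducts

universe w v u

namespace Paper

variable {A : Type u} [Category.{v} A] [Abelian A]

/-!
Choose `f₀ : X₀ ⟶ E` with `X₀ ∈ T` of maximal image `I`, so that every map from `T` to `E`
factors through `I`. Embed `K = ker (X₀ ⟶ I)` into some `Y ∈ T^{⊥₁}` with cokernel `T₁ ∈ T` and
push `0 → K → X₀ → I → 0` out along `K ⟶ Y`. The pushout `X̃` is an extension of `T₁` by `X₀`,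
hence lies in `T`, and `X̃ ⟶ I` has kernel `Y`, so every map from `T` to `I` lifts to `X̃`.
-/

lemma isSes_kernel_ι {Y Z : A} (e : Y ⟶ Z) [Epi e] : IsSes (kernel.ι e) e :=
  ⟨kernel.condition e,
    { exact := ShortComplex.exact_of_f_is_kernel _ (kernelIsKernel e)
      mono_f := by dsimp; infer_instance
      epi_g := by dsimp; infer_instance }⟩

section

variable {X X' Y Z P : A}

lemma IsSes.of_isPushout {i : X ⟶ Y} {p : Y ⟶ Z} (h : IsSes i p) {f : X ⟶ X'}
    {i' : X' ⟶ P} {g : Y ⟶ P} (sq : IsPushout f i i' g) {p' : P ⟶ Z}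
    (hi' : i' ≫ p' = 0) (hg : g ≫ p' = p) : IsSes i' p' := by
  obtain ⟨_, hse⟩ := h
  have : Mono i := hse.mono_f
  have : Epi p := hse.epi_g
  have : Mono i' := MorphismProperty.IsStableUnderCobaseChange.of_isPushout
    (P := MorphismProperty.monomorphisms A) sq ‹Mono i›
  have : Epi p' := epi_of_epi_fac hg
  refine ⟨hi', ShortComplex.ShortExact.mk' (ShortComplex.exact_of_g_is_cokernel _ ?_) ‹_› ‹_›⟩
  refine CokernelCofork.IsColimit.ofπ' _ _ fun {W} k hk => ?_
  obtain ⟨c, hc⟩ := Cofork.IsColimit.desc' hse.exact.gIsCokernel (g ≫ k) <| by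
    simp [← sq.w_assoc, show i' ≫ k = 0 from hk]
  exact ⟨c, sq.hom_ext (by simpa [reassoc_of% hi'] using hk.symm)
    (by simpa [reassoc_of% hg] using hc)⟩

lemma IsSes.of_isPullback {i : X ⟶ Y} {p : Y ⟶ Z} (h : IsSes i p) {f : X' ⟶ Z}
    {p' : P ⟶ X'} {g : P ⟶ Y} (sq : IsPullback g p' p f) {i' : X ⟶ P}
    (hi' : i' ≫ p' = 0) (hg : i' ≫ g = i) : IsSes i' p' := by
  obtain ⟨_, hse⟩ := h
  have : Mono i := hse.mono_f
  have : Epi p := hse.epi_g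
  have : Epi p' := MorphismProperty.IsStableUnderBaseChange.of_isPullback
    (P := MorphismProperty.epimorphisms A) sq ‹Epi p›
  have : Mono i' := mono_of_mono_fac hg
  refine ⟨hi', ShortComplex.ShortExact.mk' (ShortComplex.exact_of_f_is_kernel _ ?_) ‹_› ‹_›⟩
  refine KernelFork.IsLimit.ofι' _ _ fun {W} k hk => ?_
  obtain ⟨c, hc⟩ := KernelFork.IsLimit.lift' hse.exact.fIsKernel (k ≫ g) <| by
    simp [sq.w, reassoc_of% show k ≫ p' = 0 from hk]
  exact ⟨c, sq.hom_ext (by simpa [hg] using hc) (by simpa [hi'] using hk.symm)⟩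

end

lemma Ext1Zero.exists_lift {K B N X : A} (hX : Ext1Zero X K) {k : K ⟶ B} {e : B ⟶ N}
    (hke : IsSes k e) (g : X ⟶ N) : ∃ l : X ⟶ B, l ≫ e = g := by
  have hk : IsSes (pullback.lift k 0 (by simp [hke.1])) (pullback.snd e g) :=
    hke.of_isPullback (IsPullback.of_hasPullback e g) (pullback.lift_snd _ _ _)
      (pullback.lift_fst _ _ _)
  obtain ⟨s, hs⟩ := hX _ _ hk
  exact ⟨s ≫ pullback.fst e g, by rw [assoc, pullback.condition, reassoc_of% hs]⟩

/-- Projective dimension at most one makes `Ext¹(X, -)` right exact: the extension by `N` is the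
image of the one by `Y` obtained by pushing a projective presentation of `X` out along a lift
`P₁ ⟶ Y`. -/
lemma Ext1Zero.of_epi {X Y N : A} (hX : PdLeOne X) (hY : Ext1Zero X Y) (u : Y ⟶ N) [Epi u] :
    Ext1Zero X N := by
  intro W i p hip
  obtain ⟨P₁, P₀, j, π, hP₁, hP₀, hjπ⟩ := hX
  obtain ⟨hw, hse⟩ := hip
  have : Mono i := hse.mono_f
  have : Epi p := hse.epi_g
  let α : P₀ ⟶ W := Projective.factorThru π p
  let β : P₁ ⟶ N := hse.exact.lift (j ≫ α) (by simp [α, hjπ.1])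
  let γ : P₁ ⟶ Y := Projective.factorThru β u
  have hU : IsSes (pushout.inl γ j) (pushout.desc 0 π (by simp [hjπ.1])) :=
    hjπ.of_isPushout (IsPushout.of_hasPushout γ j) (pushout.inl_desc _ _ _)
      (pushout.inr_desc _ _ _)
  obtain ⟨s, hs⟩ := hY _ _ hU
  let φ : pushout γ j ⟶ W := pushout.desc (u ≫ i) α <| by
    rw [Projective.factorThru_comp_assoc, ShortComplex.Exact.lift_f]
  have hφ : φ ≫ p = pushout.desc 0 π (by simp [hjπ.1]) := by
    ext
    · rw [pushout.inl_desc_assoc, pushout.inl_desc, assoc, hw, comp_zero]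
    · rw [pushout.inr_desc_assoc, pushout.inr_desc, Projective.factorThru_comp]
  exact ⟨s ≫ φ, by rw [assoc, hφ, hs]⟩

namespace IsWeakTilting

variable {T : Set A}

lemma mem_of_isSes (hT : IsWeakTilting T) {X Y Z : A} (hX : X ∈ T) (hZ : Z ∈ T) {i : X ⟶ Y} {p : Y ⟶ Z}
    (hip : IsSes i p) : Y ∈ T := by
  obtain ⟨s, hs⟩ := hT.ext1_zero hZ hX i p hip
  obtain ⟨hw, hse⟩ := hip
  let e := (ShortComplex.Splitting.ofExactOfSection _ hse.exact s hs hse.mono_f).isoBinaryBiproduct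
  exact hT.summand_mem (hT.sum_mem hX hZ) ⟨e.hom, e.inv, e.hom_inv_id⟩

/-- Push the `T`-coresolution of a projective cover of `K` out along the cover. -/
lemma exists_isSes_rightExt1Perp (hT : IsWeakTilting T) [EnoughProjectives A] (K : A) :
    ∃ (Y T₁ : A) (κ : K ⟶ Y) (τ : Y ⟶ T₁), Y ∈ rightExt1Perp T ∧ T₁ ∈ T ∧ IsSes κ τ := by
  obtain ⟨T₀, T₁, j, p, hT₀, hT₁, hjp⟩ := hT.coresolution _ (Projective.projective_over K)
  have hw : Projective.π K ≫ 0 = j ≫ p := by rw [comp_zero, hjp.1]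
  refine ⟨_, T₁, _, _, fun X hX => ?_, hT₁,
    hjp.of_isPushout (IsPushout.of_hasPushout (Projective.π K) j) (pushout.inl_desc 0 p hw)
      (pushout.inr_desc 0 p hw)⟩
  exact (hT.ext1_zero hX hT₀).of_epi (hT.pd_le_one X hX) (pushout.inr (Projective.π K) j)

end IsWeakTilting

/-- Two images lie in the image of the map out of the sum, so a maximal image (which exists by
noetherianity) is the largest one. -/
lemma exists_imageSubobject_le_of_sum_mem {S : Set A}
    (hS : ∀ {X Y : A}, X ∈ S → Y ∈ S → (X ⊞ Y) ∈ S) {X : A} (hX : X ∈ S)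
    (E : A) [IsNoetherianObject E] :
    ∃ X₀ ∈ S, ∃ f₀ : X₀ ⟶ E, ∀ X' ∈ S, ∀ g : X' ⟶ E, imageSubobject g ≤ imageSubobject f₀ := by
  obtain ⟨_, ⟨X₀, hX₀, f₀, rfl⟩, hmax⟩ := (wellFounded_gt (α := Subobject E)).has_min
    {s | ∃ X ∈ S, ∃ f : X ⟶ E, imageSubobject f = s} ⟨_, X, hX, 0, rfl⟩
  refine ⟨X₀, hX₀, f₀, fun X' hX' g => ?_⟩
  have hf₀ : imageSubobject f₀ ≤ imageSubobject (biprod.desc f₀ g) := by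
    simpa using imageSubobject_comp_le biprod.inl (biprod.desc f₀ g)
  have hg : imageSubobject g ≤ imageSubobject (biprod.desc f₀ g) := by
    simpa using imageSubobject_comp_le biprod.inr (biprod.desc f₀ g)
  rwa [← eq_of_le_of_not_lt hf₀ (hmax _ ⟨_, hS hX₀ hX', biprod.desc f₀ g, rfl⟩)] at hg

/-- In a noetherian abelian category with enough projectives, every
weak tilting subcategory is contravariantly finite, i.e. every object admits a right
`T`-approximation. -/
theorem statement9 [EnoughProjectives A] [∀ X : A, IsNoetherianObject X]
    {T : Set A} (hT : IsWeakTilting T) :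
    ∀ E : A, ∃ (X : A) (φ : X ⟶ E), IsRightApprox T φ := by
  intro E
  -- only to know that `T` is nonempty
  obtain ⟨T₀, -, -, -, hT₀, -⟩ := hT.coresolution _ (Projective.projective_over E)
  obtain ⟨X₀, hX₀, f₀, hmax⟩ := exists_imageSubobject_le_of_sum_mem hT.sum_mem hT₀ E
  let e₀ := factorThruImageSubobject f₀
  obtain ⟨Y, T₁, κ, τ, hY, hT₁, hκτ⟩ := hT.exists_isSes_rightExt1Perp (kernel e₀)
  let sq := IsPushout.of_hasPushout κ (kernel.ι e₀)
  have he₀ : κ ≫ 0 = kernel.ι e₀ ≫ e₀ := by rw [comp_zero, kernel.condition]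
  have hτ : κ ≫ τ = kernel.ι e₀ ≫ 0 := by rw [comp_zero, hκτ.1]
  have hYI : IsSes (pushout.inl κ (kernel.ι e₀)) (pushout.desc 0 e₀ he₀) :=
    (isSes_kernel_ι e₀).of_isPushout sq (pushout.inl_desc _ _ _) (pushout.inr_desc _ _ _)
  have hX₀T₁ : IsSes (pushout.inr κ (kernel.ι e₀)) (pushout.desc τ 0 hτ) :=
    hκτ.of_isPushout sq.flip (pushout.inr_desc _ _ _) (pushout.inl_desc _ _ _)
  refine ⟨_, pushout.desc 0 e₀ he₀ ≫ (imageSubobject f₀).arrow,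
    hT.mem_of_isSes hX₀ hT₁ hX₀T₁, fun X' hX' g => ?_⟩
  obtain ⟨l, hl⟩ := (hY X' hX').exists_lift hYI
    (factorThruImageSubobject g ≫ Subobject.ofLE _ _ (hmax X' hX' g))
  exact ⟨l, by rw [← assoc, hl, assoc, Subobject.ofLE_arrow, imageSubobject_arrow_comp]⟩

end Paper
end
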